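/- arXiv:2210.11961 — 4 statements merged into one kernel-verified Lean document; each statement's English description precedes it below -/
import Mathlib

section
/- Let q > 2 be an integer and let P be a finite set with |P| = q². Suppose L₁, …, L_s are families of q-element subsets of P, each family having the property that every two distinct points of P lie in exactly one of its members, and suppose that for all i ≠ j, every member of L_i intersects every member of L_j in at most two points. Then s ≤ max{7, q+2}. -/
/-!
Fix two distinct points `x, y` and, in each plane `Lᵢ`, the block `Bᵢ` through them. Any further
point common to `Bᵢ` and `Bⱼ` would give `|Bᵢ ∩ Bⱼ| ≥ 3`, so the sets `Bᵢ \ {x, y}` are pairwise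
disjoint subsets of `P \ {x, y}`, each of size `q - 2`. Hence `s (q - 2) ≤ q² - 2`, that is
`s ≤ q + 2 + 2 / (q - 2)`, which is `q + 2` for `q ≥ 5` and `7` for `q ∈ {3, 4}`.
-/

open Finset

theorem Finset.card_mul_le_card_of_pairwise_disjoint {ι α : Type*} [Fintype ι] [DecidableEq α]
    {U : Finset α} {A : ι → Finset α} {m : ℕ} (hsub : ∀ i, A i ⊆ U)
    (hcard : ∀ i, m ≤ (A i).card) (hdisj : Pairwise fun i j => Disjoint (A i) (A j)) :
    Fintype.card ι * m ≤ U.card :=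
  calc Fintype.card ι * m = ∑ _i : ι, m := by rw [sum_const, card_univ, smul_eq_mul]
    _ ≤ ∑ i, (A i).card := sum_le_sum fun i _ => hcard i
    _ = (univ.biUnion A).card := (card_biUnion fun i _ j _ hij => hdisj hij).symm
    _ ≤ U.card := card_le_card (biUnion_subset.mpr fun i _ => hsub i)

theorem Finset.disjoint_sdiff_pair_of_card_inter_le_two {α : Type*} [DecidableEq α]
    {B₁ B₂ : Finset α} {x y : α} (hxy : x ≠ y) (hx₁ : x ∈ B₁) (hy₁ : y ∈ B₁) (hx₂ : x ∈ B₂)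
    (hy₂ : y ∈ B₂) (hinter : (B₁ ∩ B₂).card ≤ 2) :
    Disjoint (B₁ \ {x, y}) (B₂ \ {x, y}) := by
  refine disjoint_left.mpr fun z hz₁ hz₂ => ?_
  simp only [mem_sdiff, mem_insert, mem_singleton, not_or] at hz₁ hz₂
  have hsub : {x, y, z} ⊆ B₁ ∩ B₂ := by
    intro w hw
    simp only [mem_insert, mem_singleton] at hw
    rcases hw with rfl | rfl | rfl <;> simp_all
  have hthree : ({x, y, z} : Finset α).card = 3 :=
    card_eq_three.mpr ⟨x, y, z, hxy, Ne.symm hz₁.2.1, Ne.symm hz₁.2.2, rfl⟩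
  have := card_le_card hsub
  omega

theorem card_mul_sub_two_le_of_blocks_through_pair {ι P : Type*} [Fintype ι] [Fintype P]
    [DecidableEq P] {q : ℕ} {B : ι → Finset P} {x y : P} (hxy : x ≠ y) (hx : ∀ i, x ∈ B i)
    (hy : ∀ i, y ∈ B i) (hcard : ∀ i, (B i).card = q)
    (hinter : Pairwise fun i j => (B i ∩ B j).card ≤ 2) :
    Fintype.card ι * (q - 2) ≤ Fintype.card P - 2 := by
  have hpair : ({x, y} : Finset P).card = 2 := card_pair hxy
  have hsub : ∀ i, {x, y} ⊆ B i := fun i => insert_subset (hx i) (singleton_subset_iff.mpr (hy i))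
  calc Fintype.card ι * (q - 2)
      ≤ (univ \ {x, y}).card :=
        card_mul_le_card_of_pairwise_disjoint (A := fun i => B i \ {x, y})
          (fun i => sdiff_subset_sdiff (subset_univ _) le_rfl)
          (fun i => by rw [card_sdiff_of_subset (hsub i), hcard i, hpair])
          (fun i j hij => disjoint_sdiff_pair_of_card_inter_le_two hxy (hx i) (hy i) (hx j) (hy j)
            (hinter hij))
    _ = Fintype.card P - 2 := by rw [card_sdiff_of_subset (subset_univ _), card_univ, hpair]

theorem Nat.le_max_seven_add_two_of_mul_sub_two_le {q s : ℕ} (hq : 2 < q)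
    (h : s * (q - 2) ≤ q ^ 2 - 2) : s ≤ max 7 (q + 2) := by
  obtain ⟨b, rfl⟩ : ∃ b, q = b + 3 := ⟨q - 3, by omega⟩
  have h' : s * (b + 1) ≤ (b + 1) * (b + 5) + 2 := by
    have : (b + 3) ^ 2 - 2 = (b + 1) * (b + 5) + 2 := by
      rw [Nat.sub_eq_iff_eq_add (by nlinarith)]; ring
    simpa [this] using h
  rcases Nat.lt_or_ge b 2 with hb | hb
  · interval_cases b <;> omega
  · have : s ≤ b + 5 := by
      by_contra! hs
      nlinarith [Nat.mul_le_mul_right (b + 1) (show b + 6 ≤ s by omega)]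
    omega

/-- If `L₁, …, L_s` are mutually orthogoval affine planes of order `q > 2`
on a common point set `P` with `|P| = q²`, then `s ≤ max 7 (q+2)`. -/
theorem mutually_orthogoval_affine_planes_bound
    (q : ℕ) (hq : 2 < q) (P : Type*) [Fintype P] [DecidableEq P]
    (hP : Fintype.card P = q ^ 2) (s : ℕ) (L : Fin s → Set (Finset P))
    (hplane : ∀ i : Fin s,
      (∀ B ∈ L i, B.card = q) ∧
      (∀ x y : P, x ≠ y → ∃! B : Finset P, B ∈ L i ∧ x ∈ B ∧ y ∈ B))
    (horth : ∀ i j : Fin s, i ≠ j →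
      ∀ B₁ ∈ L i, ∀ B₂ ∈ L j, (B₁ ∩ B₂).card ≤ 2) :
    s ≤ max 7 (q + 2) := by
  obtain ⟨x, y, hxy⟩ := Fintype.exists_pair_of_one_lt_card (by rw [hP]; nlinarith)
  choose B hBL hxB hyB using fun i => ((hplane i).2 x y hxy).exists
  have hcount := card_mul_sub_two_le_of_blocks_through_pair hxy hxB hyB
    (fun i => (hplane i).1 _ (hBL i)) (fun i j hij => horth i j hij _ (hBL i) _ (hBL j))
  rw [Fintype.card_fin, hP] at hcount
  exact Nat.le_max_seven_add_two_of_mul_sub_two_le hq hcount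
end

section
/- Let q = 2ⁿ with n ≥ 1, let F be the finite field with q elements, and let b, c ∈ F be such that X³ + bX + c is irreducible over F. Define g : F² → F² by g(x,y) = (x² + y, y² + by + cx). Then g is a bijection, and for every two affine lines ℓ and m of F², the set ℓ ∩ g(m) has at most two elements. Consequently the sets g⁻¹(ℓ), for ℓ an affine line, form the line set of a Desarguesian affine plane of order q orthogoval to the standard affine plane AG(2,q) whose lines are the affine lines of F². -/
/-!
In characteristic 2 squaring is additive, hence so is `g`, and `g (x, y) = 0` forces `y = x²` and
`x (x³ + b x + c) = 0`; as the cubic has no root, `g` is injective. Composing the parametrization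
`s ↦ q + s • r` of a line with `g` and with a nonzero linear form `a` gives a polynomial of degree
at most 2 in `s`. Its two top coefficients vanish together only if `a.2` kills the binary cubic
`r₂³ + b r₂ r₁² + c r₁³`, which has no nontrivial zero, and then `a.1 • r = 0`; so a line meets
the image of a line in at most two points.
-/

open Polynomial

/-- An affine line of `F²`: a set `{p + t • v : t ∈ F}` with `v ≠ 0`.  These are the lines of
the Desarguesian affine plane `AG(2,|F|)`. -/
def IsAffineLine {F : Type*} [Field F] (ℓ : Set (F × F)) : Prop :=
  ∃ p v : F × F, v ≠ 0 ∧ ℓ = {w | ∃ t : F, w = p + t • v}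

theorem IsAffineLine.exists_subset_setOf_linear {F : Type*} [Field F] {ℓ : Set (F × F)}
    (hℓ : IsAffineLine ℓ) : ∃ a : F × F, a ≠ 0 ∧ ∃ γ : F, ℓ ⊆ {w | a.1 * w.1 + a.2 * w.2 = γ} := by
  obtain ⟨p, v, hv, rfl⟩ := hℓ
  refine ⟨(v.2, -v.1), fun h ↦ hv ?_, v.2 * p.1 - v.1 * p.2, ?_⟩
  · simp only [Prod.ext_iff, Prod.fst_zero, Prod.snd_zero, neg_eq_zero] at h ⊢
    exact h.symm
  · rintro _ ⟨t, rfl⟩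
    simp only [Set.mem_ofPred_eq, Prod.fst_add, Prod.snd_add, Prod.smul_fst, Prod.smul_snd,
      smul_eq_mul]
    ring

theorem Polynomial.encard_setOf_isRoot_le_natDegree {R : Type*} [CommRing R] [IsDomain R]
    {p : R[X]} (hp : p ≠ 0) : {x | p.IsRoot x}.encard ≤ p.natDegree := by
  classical
  have hroots : {x | p.IsRoot x} = ↑p.roots.toFinset := by
    ext x
    simp [mem_roots hp]
  rw [hroots, Set.encard_coe_eq_coe_finsetCard]
  exact_mod_cast (Multiset.toFinset_card_le _).trans (card_roots' p)

theorem encard_setOf_quadratic_eq_zero_le_two {R : Type*} [CommRing R] [IsDomain R]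
    {a₂ a₁ : R} (h : a₂ ≠ 0 ∨ a₁ ≠ 0) (a₀ : R) :
    {x | a₂ * x ^ 2 + a₁ * x + a₀ = 0}.encard ≤ 2 := by
  set p : R[X] := C a₂ * X ^ 2 + C a₁ * X + C a₀
  have hp : p ≠ 0 := by
    intro hp0
    have h2 : p.coeff 2 = a₂ := by simp [p]
    have h1 : p.coeff 1 = a₁ := by simp [p]
    rw [hp0, coeff_zero] at h2 h1
    exact h.elim (· h2.symm) (· h1.symm)
  have hdeg : p.natDegree ≤ 2 := by simp only [p]; compute_degree
  calc {x | a₂ * x ^ 2 + a₁ * x + a₀ = 0}.encard = {x | p.IsRoot x}.encard := by simp [p]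
    _ ≤ p.natDegree := encard_setOf_isRoot_le_natDegree hp
    _ ≤ 2 := by exact_mod_cast hdeg

theorem Polynomial.cubic_ne_zero_of_irreducible {K : Type*} [Field K] {b c : K}
    (hirr : Irreducible (X ^ 3 + C b * X + C c : K[X])) (u : K) : u ^ 3 + b * u + c ≠ 0 := by
  intro hu
  have hdeg : (X ^ 3 + C b * X + C c : K[X]).degree = 3 := by compute_degree!
  have := degree_eq_one_of_irreducible_of_root hirr (x := u) (by simpa using hu)
  rw [hdeg] at this
  exact absurd this (by decide)

theorem Polynomial.binaryCubic_ne_zero_of_irreducible {K : Type*} [Field K] {b c : K}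
    (hirr : Irreducible (X ^ 3 + C b * X + C c : K[X])) {r : K × K} (hr : r ≠ 0) :
    r.2 ^ 3 + b * r.2 * r.1 ^ 2 + c * r.1 ^ 3 ≠ 0 := by
  intro h
  by_cases hr₁ : r.1 = 0
  · refine hr (Prod.ext hr₁ (pow_eq_zero_iff three_ne_zero |>.mp ?_))
    simpa [hr₁] using h
  · refine cubic_ne_zero_of_irreducible hirr (r.2 / r.1) ?_
    field_simp
    linear_combination h

def conicPencilMap {R : Type*} [CommRing R] (b c : R) (w : R × R) : R × R :=
  (w.1 ^ 2 + w.2, w.2 ^ 2 + b * w.2 + c * w.1)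

section CharTwo

variable {K : Type*} [Field K] [CharP K 2]

theorem conicPencilMap_add (b c : K) (w w' : K × K) :
    conicPencilMap b c (w + w') = conicPencilMap b c w + conicPencilMap b c w' := by
  ext <;> simp only [conicPencilMap, Prod.fst_add, Prod.snd_add, CharTwo.add_sq] <;> ring

theorem eq_zero_of_conicPencilMap_eq_zero {b c : K}
    (hirr : Irreducible (X ^ 3 + C b * X + C c : K[X])) {w : K × K}
    (hw : conicPencilMap b c w = 0) : w = 0 := by
  obtain ⟨x, y⟩ := w
  simp only [conicPencilMap, Prod.mk_eq_zero] at hw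
  obtain ⟨hy, hx⟩ := hw
  obtain rfl : x ^ 2 = y := CharTwo.add_eq_zero.mp hy
  have hx : x * (x ^ 3 + b * x + c) = 0 := by linear_combination hx
  obtain rfl : x = 0 := (mul_eq_zero.mp hx).resolve_right (cubic_ne_zero_of_irreducible hirr x)
  simp

theorem conicPencilMap_injective {b c : K} (hirr : Irreducible (X ^ 3 + C b * X + C c : K[X])) :
    Function.Injective (conicPencilMap b c) := fun w w' h ↦
  CharTwo.add_eq_zero.mp <| eq_zero_of_conicPencilMap_eq_zero hirr <| by
    rw [conicPencilMap_add, h, CharTwo.add_self_eq_zero]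

theorem linear_conicPencilMap_line (b c : K) (a q r : K × K) (s : K) :
    a.1 * (conicPencilMap b c (q + s • r)).1 + a.2 * (conicPencilMap b c (q + s • r)).2 =
      (a.1 * r.1 ^ 2 + a.2 * r.2 ^ 2) * s ^ 2 + (a.1 * r.2 + a.2 * (b * r.2 + c * r.1)) * s +
        (a.1 * (conicPencilMap b c q).1 + a.2 * (conicPencilMap b c q).2) := by
  rw [conicPencilMap_add]
  simp only [Prod.fst_add, Prod.snd_add, conicPencilMap, Prod.smul_fst, Prod.smul_snd, smul_eq_mul]
  ring

theorem linear_conicPencilMap_line_coeffs_ne_zero {b c : K}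
    (hirr : Irreducible (X ^ 3 + C b * X + C c : K[X]))
    {a r : K × K} (ha : a ≠ 0) (hr : r ≠ 0) :
    a.1 * r.1 ^ 2 + a.2 * r.2 ^ 2 ≠ 0 ∨ a.1 * r.2 + a.2 * (b * r.2 + c * r.1) ≠ 0 := by
  by_contra! h
  obtain ⟨h₂, h₁⟩ := h
  have ha₂ : a.2 = 0 := by
    refine (mul_eq_zero.mp ?_).resolve_right (binaryCubic_ne_zero_of_irreducible hirr hr)
    linear_combination r.1 ^ 2 * h₁ + r.2 * h₂ - a.1 * r.1 ^ 2 * r.2 * CharTwo.two_eq_zero (R := K)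
  simp only [ha₂, zero_mul, add_zero, mul_eq_zero] at h₁ h₂
  have ha₁ : a.1 ≠ 0 := fun h ↦ ha (Prod.ext h ha₂)
  exact hr (Prod.ext (pow_eq_zero_iff two_ne_zero |>.mp (h₂.resolve_left ha₁))
    (h₁.resolve_left ha₁))

theorem encard_inter_image_conicPencilMap_le_two {b c : K}
    (hirr : Irreducible (X ^ 3 + C b * X + C c : K[X])) {ℓ m : Set (K × K)}
    (hℓ : IsAffineLine ℓ) (hm : IsAffineLine m) :
    (ℓ ∩ conicPencilMap b c '' m).encard ≤ 2 := by
  obtain ⟨a, ha, γ, hℓa⟩ := hℓ.exists_subset_setOf_linear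
  obtain ⟨q, r, hr, rfl⟩ := hm
  set A₂ := a.1 * r.1 ^ 2 + a.2 * r.2 ^ 2
  set A₁ := a.1 * r.2 + a.2 * (b * r.2 + c * r.1)
  set A₀ := a.1 * (conicPencilMap b c q).1 + a.2 * (conicPencilMap b c q).2 - γ
  have hsub : ℓ ∩ conicPencilMap b c '' {w | ∃ t : K, w = q + t • r} ⊆
      (fun s ↦ conicPencilMap b c (q + s • r)) '' {s | A₂ * s ^ 2 + A₁ * s + A₀ = 0} := by
    rintro _ ⟨hwℓ, _, ⟨s, rfl⟩, rfl⟩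
    refine ⟨s, ?_, rfl⟩
    have hγ := hℓa hwℓ
    rw [Set.mem_ofPred_eq, linear_conicPencilMap_line] at hγ
    rw [Set.mem_ofPred_eq]
    linear_combination hγ
  calc (ℓ ∩ conicPencilMap b c '' {w | ∃ t : K, w = q + t • r}).encard
      ≤ ((fun s ↦ conicPencilMap b c (q + s • r)) '' {s | A₂ * s ^ 2 + A₁ * s + A₀ = 0}).encard :=
        Set.encard_mono hsub
    _ ≤ {s | A₂ * s ^ 2 + A₁ * s + A₀ = 0}.encard := Set.encard_image_le _ _
    _ ≤ 2 :=
      encard_setOf_quadratic_eq_zero_le_two (linear_conicPencilMap_line_coeffs_ne_zero hirr ha hr) _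

end CharTwo

theorem conic_pencil_map_bijective_and_orthogoval_general
    (n : ℕ) (F : Type*) [Field F] [Fintype F]
    (hF : Fintype.card F = 2 ^ n) (b c : F)
    (hirr : Irreducible (X ^ 3 + C b * X + C c : F[X]))
    (g : F × F → F × F)
    (hg : g = fun w => (w.1 ^ 2 + w.2, w.2 ^ 2 + b * w.2 + c * w.1)) :
    Function.Bijective g ∧
    ∀ ℓ m : Set (F × F), IsAffineLine ℓ → IsAffineLine m →
      (ℓ ∩ g '' m).encard ≤ 2 := by
  have : CharP F 2 := charP_of_card_eq_prime_pow hF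
  obtain rfl : g = conicPencilMap b c := hg
  exact ⟨Finite.injective_iff_bijective.mp (conicPencilMap_injective hirr),
    fun _ _ hℓ hm ↦ encard_inter_image_conicPencilMap_le_two hirr hℓ hm⟩

/-- Let `F` have `q = 2ⁿ` elements and let `X³ + bX + c` be irreducible over `F`.
Then `g(x,y) = (x² + y, y² + by + cx)` is a bijection of `F²` and the image of every affine
line under `g` meets every affine line in at most two points; hence the preimages `g⁻¹(ℓ)` of
the affine lines form a Desarguesian affine plane of order `q` orthogoval to `AG(2,q)`. -/
theorem conic_pencil_map_bijective_and_orthogoval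
    (n : ℕ) (hn : 1 ≤ n) (F : Type*) [Field F] [Fintype F]
    (hF : Fintype.card F = 2 ^ n) (b c : F)
    (hirr : Irreducible (X ^ 3 + C b * X + C c : F[X]))
    (g : F × F → F × F)
    (hg : g = fun w => (w.1 ^ 2 + w.2, w.2 ^ 2 + b * w.2 + c * w.1)) :
    Function.Bijective g ∧
    ∀ ℓ m : Set (F × F), IsAffineLine ℓ → IsAffineLine m →
      (ℓ ∩ g '' m).encard ≤ 2 :=
  conic_pencil_map_bijective_and_orthogoval_general n F hF b c hirr g hg
end

section
/- For every n ≥ 1 and q = 2ⁿ, there exists a pair of Desarguesian orthogoval affine planes of order q. Precisely: letting F be the finite field with q elements, there exists a bijection f : F² → F² such that for every two affine lines ℓ and m of F², the image f(ℓ) intersects m in at most two points; hence the sets f(ℓ), for ℓ an affine line, form the line set of an affine plane of order q orthogoval to the standard affine plane AG(2,q). -/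
/-- The map `(x, d, e) ↦ (X - x)(X² + dX + e)` on monic cubics is not injective, hence not
surjective. -/
theorem exists_forall_cubic_ne_zero (R : Type*) [CommRing R] [Finite R] [Nontrivial R] :
    ∃ a b c : R, ∀ x : R, x ^ 3 + a * x ^ 2 + b * x + c ≠ 0 := by
  let coeffs : R × R × R → R × R × R := fun ⟨x, d, e⟩ => (d - x, e - x * d, -(x * e))
  have not_injective : ¬ Function.Injective coeffs := fun h =>
    one_ne_zero (congrArg Prod.fst (@h (1, 0, 0) (0, -1, 0) (by simp [coeffs])))
  obtain ⟨⟨a, b, c⟩, habc⟩ : ∃ y, ∀ r, coeffs r ≠ y := by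
    simpa [Function.Surjective] using mt Finite.injective_iff_surjective.mpr not_injective
  refine ⟨a, b, c, fun x hx => habc (x, a + x, b + x * (a + x)) ?_⟩
  simp only [coeffs, Prod.mk.injEq]
  exact ⟨by ring, by ring, by linear_combination -hx⟩

open Polynomial in
theorem encard_setOf_quadratic_eq_zero_le_two_s12 {F : Type*} [Field F] {a b c : F}
    (h : a ≠ 0 ∨ b ≠ 0) : {t : F | a * t ^ 2 + b * t + c = 0}.encard ≤ 2 := by
  classical
  set p : F[X] := C a * X ^ 2 + C b * X + C c
  have hp : p ≠ 0 := by
    rintro hp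
    rcases h with h | h
    · exact h (by simpa [p] using congrArg (coeff · 2) hp)
    · exact h (by simpa [p] using congrArg (coeff · 1) hp)
  have hroots : {t : F | a * t ^ 2 + b * t + c = 0} = ↑p.roots.toFinset := by
    ext t; simp [p, hp]
  rw [hroots, Set.encard_coe_eq_coe_finsetCard]
  exact_mod_cast (p.roots.toFinset_card_le.trans (card_roots' p)).trans natDegree_quadratic_le

theorem charP_two_of_card_eq_two_pow {F : Type*} [Field F] [Fintype F] {n : ℕ}
    (hF : Fintype.card F = 2 ^ n) : CharP F 2 := by
  have hcard : (2 : F) ^ n = 0 := by exact_mod_cast hF ▸ FiniteField.cast_card_eq_zero F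
  exact CharTwo.of_one_ne_zero_of_two_eq_zero one_ne_zero (eq_zero_of_pow_eq_zero hcard)

namespace Orthogoval

variable {F : Type*} [Field F]

def wedge (u v : F × F) : F := u.1 * v.2 - u.2 * v.1

theorem wedge_swap (u v : F × F) : wedge u v = -wedge v u := by
  simp only [wedge]; ring

theorem wedge_smul_right (u v w : F × F) : wedge u v • w = wedge w v • u + wedge u w • v := by
  ext <;> simp only [wedge, Prod.smul_fst, Prod.smul_snd, Prod.fst_add, Prod.snd_add,
    smul_eq_mul] <;> ring

theorem wedge_eq_zero_of_wedge_eq_zero {u v w : F × F} (hw : w ≠ 0) (hu : wedge u w = 0)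
    (hv : wedge v w = 0) : wedge u v = 0 := by
  have h := wedge_smul_right u v w
  rw [hu, wedge_swap w, hv, neg_zero, zero_smul, zero_smul, add_zero] at h
  exact (smul_eq_zero.mp h).resolve_right hw

theorem encard_range_conic_inter_line_le_two {x₀ y z p v : F × F}
    (hyz : wedge y z ≠ 0) (hv : v ≠ 0) :
    (Set.range (fun t : F => x₀ + t ^ 2 • y + t • z) ∩ {w | ∃ s : F, w = p + s • v}).encard
      ≤ 2 := by
  have hsub : Set.range (fun t : F => x₀ + t ^ 2 • y + t • z) ∩ {w | ∃ s : F, w = p + s • v} ⊆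
      (fun t : F => x₀ + t ^ 2 • y + t • z) ''
        {t | wedge y v * t ^ 2 + wedge z v * t + wedge (x₀ - p) v = 0} := by
    rintro _ ⟨⟨t, rfl⟩, s, hs⟩
    refine ⟨t, ?_, rfl⟩
    have h1 := congrArg Prod.fst hs
    have h2 := congrArg Prod.snd hs
    simp only [Prod.fst_add, Prod.snd_add, Prod.smul_fst, Prod.smul_snd, smul_eq_mul] at h1 h2
    simp only [wedge, Set.mem_ofPred_eq, Prod.fst_sub, Prod.snd_sub]
    linear_combination v.2 * h1 - v.1 * h2
  have hnondeg : wedge y v ≠ 0 ∨ wedge z v ≠ 0 := by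
    by_contra! h
    exact hyz (wedge_eq_zero_of_wedge_eq_zero hv h.1 h.2)
  calc _ ≤ _ := Set.encard_mono hsub
    _ ≤ _ := Set.encard_image_le _ _
    _ ≤ 2 := encard_setOf_quadratic_eq_zero_le_two_s12 hnondeg

def cubicForm (a b c : F) (v : F × F) : F :=
  v.1 ^ 3 + a * v.1 ^ 2 * v.2 + b * v.1 * v.2 ^ 2 + c * v.2 ^ 3

theorem cubicForm_ne_zero {a b c : F} (h : ∀ x : F, x ^ 3 + a * x ^ 2 + b * x + c ≠ 0)
    {v : F × F} (hv : v ≠ 0) : cubicForm a b c v ≠ 0 := by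
  obtain ⟨x, y⟩ := v
  by_cases hy : y = 0
  · subst hy
    have hx : x ≠ 0 := by rintro rfl; exact hv rfl
    simpa [cubicForm] using hx
  · have hhom : cubicForm a b c (x, y) =
        y ^ 3 * ((x / y) ^ 3 + a * (x / y) ^ 2 + b * (x / y) + c) := by
      simp only [cubicForm]; field_simp
    rw [hhom]
    exact mul_ne_zero (pow_ne_zero 3 hy) (h _)

/-- The signs make `wedge (v ^ 2) (cubicLin a b c v) = cubicForm a b c v` in every
characteristic. -/
def cubicLin (a b c : F) (v : F × F) : F × F := (-(b * v.1 + c * v.2), v.1 + a * v.2)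

theorem wedge_sq_cubicLin (a b c : F) (v : F × F) :
    wedge (v ^ 2) (cubicLin a b c v) = cubicForm a b c v := by
  simp only [wedge, cubicLin, cubicForm, Prod.pow_fst, Prod.pow_snd]; ring

theorem cubicLin_add_smul (a b c : F) (p v : F × F) (t : F) :
    cubicLin a b c (p + t • v) = cubicLin a b c p + t • cubicLin a b c v := by
  ext <;> simp only [cubicLin, Prod.fst_add, Prod.snd_add, Prod.smul_fst, Prod.smul_snd,
    smul_eq_mul] <;> ring

def cubicMap (a b c : F) (v : F × F) : F × F := v ^ 2 + cubicLin a b c v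

theorem cubicMap_add_smul [CharP F 2] (a b c : F) (p v : F × F) (t : F) :
    cubicMap a b c (p + t • v) = cubicMap a b c p + t ^ 2 • v ^ 2 + t • cubicLin a b c v := by
  rw [cubicMap, cubicMap, CharTwo.add_sq, cubicLin_add_smul, _root_.smul_pow]
  abel

theorem cubicMap_add [CharP F 2] (a b c : F) (u v : F × F) :
    cubicMap a b c (u + v) = cubicMap a b c u + cubicMap a b c v := by
  simpa [cubicMap, add_assoc] using cubicMap_add_smul a b c u v 1

theorem cubicMap_injective [CharP F 2] {a b c : F}
    (h : ∀ x : F, x ^ 3 + a * x ^ 2 + b * x + c ≠ 0) : Function.Injective (cubicMap a b c) := by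
  refine (injective_iff_map_eq_zero (AddMonoidHom.mk' _ (cubicMap_add a b c))).2 fun v hv => ?_
  have hsum : v ^ 2 + cubicLin a b c v = 0 := hv
  by_contra hv0
  apply cubicForm_ne_zero h hv0
  rw [← wedge_sq_cubicLin, eq_neg_of_add_eq_zero_left hsum]
  simp only [wedge, Prod.fst_neg, Prod.snd_neg]; ring

theorem image_line_subset_range_conic [CharP F 2] (a b c : F) (p v : F × F) :
    cubicMap a b c '' {w | ∃ t : F, w = p + t • v} ⊆
      Set.range (fun t : F => cubicMap a b c p + t ^ 2 • v ^ 2 + t • cubicLin a b c v) := by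
  rintro _ ⟨_, ⟨t, rfl⟩, rfl⟩
  exact ⟨t, (cubicMap_add_smul a b c p v t).symm⟩

end Orthogoval

theorem exists_orthogoval_pair_of_affine_planes_general
    (n : ℕ) (F : Type*) [Field F] [Fintype F]
    (hF : Fintype.card F = 2 ^ n) :
    ∃ f : F × F → F × F, Function.Bijective f ∧
      ∀ ℓ m : Set (F × F), IsAffineLine ℓ → IsAffineLine m →
        (f '' ℓ ∩ m).encard ≤ 2 := by
  have := charP_two_of_card_eq_two_pow hF
  obtain ⟨a, b, c, hcubic⟩ := exists_forall_cubic_ne_zero F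
  refine ⟨Orthogoval.cubicMap a b c,
    Finite.injective_iff_bijective.mp (Orthogoval.cubicMap_injective hcubic), ?_⟩
  rintro _ _ ⟨p, v, hv, rfl⟩ ⟨p', v', hv', rfl⟩
  have hnondeg : Orthogoval.wedge (v ^ 2) (Orthogoval.cubicLin a b c v) ≠ 0 :=
    Orthogoval.wedge_sq_cubicLin a b c v ▸ Orthogoval.cubicForm_ne_zero hcubic hv
  calc _ ≤ _ := Set.encard_mono (Set.inter_subset_inter_left _
          (Orthogoval.image_line_subset_range_conic a b c p v))
    _ ≤ 2 := Orthogoval.encard_range_conic_inter_line_le_two hnondeg hv'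

/-- For every `n ≥ 1` and `q = 2ⁿ` there is a pair of Desarguesian orthogoval
affine planes of order `q`: letting `F` be the field with `q` elements, there is a bijection
`f : F² → F²` such that the image of every affine line under `f` meets every affine line in
at most two points. -/
theorem exists_orthogoval_pair_of_affine_planes
    (n : ℕ) (hn : 1 ≤ n) (F : Type*) [Field F] [Fintype F]
    (hF : Fintype.card F = 2 ^ n) :
    ∃ f : F × F → F × F, Function.Bijective f ∧
      ∀ ℓ m : Set (F × F), IsAffineLine ℓ → IsAffineLine m →
        (f '' ℓ ∩ m).encard ≤ 2 :=
  exists_orthogoval_pair_of_affine_planes_general n F hF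
end

section
/- Let n, k ≥ 1 with gcd(6k, n) = 1, let F be the finite field with q = 2ⁿ elements, and define φ_k : F² → F² by φ_k(x, y) = (x^(2^k) + y, y^(2^k) + x + y). Then the standard affine plane AG(2,q), its image under φ_k, and its image under φ_k ∘ φ_k are three mutually orthogoval affine planes: for any two distinct maps f, g among {identity, φ_k, φ_k ∘ φ_k} and any two affine lines ℓ and m of F², the set f(ℓ) ∩ g(m) has at most two elements. In particular, if gcd(n, 6) = 1 there exists a set of three mutually orthogoval affine planes of order 2ⁿ. -/
section

variable {F : Type*} [Field F]

section FiniteField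

variable [Fintype F] {n : ℕ}

theorem pow_eq_self_of_pow_pow_eq_self {p a : ℕ} (hF : Fintype.card F = p ^ n)
    (ha : a.Coprime n) {x : F} (hx : x ^ p ^ a = x) : x ^ p = x := by
  have hper : ∀ m, Function.IsPeriodicPt (· ^ p) m x ↔ x ^ p ^ m = x := fun m => by
    rw [Function.IsPeriodicPt, Function.IsFixedPt, pow_iterate]
  have := ((hper a).2 hx).gcd ((hper n).2 (hF ▸ FiniteField.pow_card x))
  rwa [ha, hper, pow_one] at this

theorem eq_zero_or_one_of_pow_two_pow_eq_self {a : ℕ} (hF : Fintype.card F = 2 ^ n)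
    (ha : a.Coprime n) {x : F} (hx : x ^ 2 ^ a = x) : x = 0 ∨ x = 1 :=
  IsIdempotentElem.iff_eq_zero_or_one.1 <| by
    rw [IsIdempotentElem, ← sq]
    exact pow_eq_self_of_pow_pow_eq_self hF ha hx

theorem encard_setOf_mul_pow_two_pow_add_mul_eq_zero_le_two {j : ℕ}
    (hF : Fintype.card F = 2 ^ n) (hj : j.Coprime n) {A B : F} (hAB : A ≠ 0 ∨ B ≠ 0) :
    {s : F | A * s ^ 2 ^ j + B * s = 0}.encard ≤ 2 := by
  by_cases hK : {s : F | A * s ^ 2 ^ j + B * s = 0} ⊆ {0}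
  · exact (Set.encard_le_encard hK).trans (by simp)
  obtain ⟨t, ht, ht0⟩ := Set.not_subset.1 hK
  simp only [Set.mem_ofPred_eq, Set.mem_singleton_iff] at ht ht0
  have hA : A ≠ 0 := by
    rintro rfl
    exact hAB.resolve_left (not_not.2 rfl) (by simpa [ht0] using ht)
  suffices h : {s : F | A * s ^ 2 ^ j + B * s = 0} ⊆ {0, t} from
    (Set.encard_le_encard h).trans (Set.encard_pair (Ne.symm ht0)).le
  intro s (hs : A * s ^ 2 ^ j + B * s = 0)
  have hfix : (s / t) ^ 2 ^ j = s / t := by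
    rw [div_pow, div_eq_div_iff (pow_ne_zero _ ht0) ht0]
    exact mul_left_cancel₀ hA (by linear_combination t * hs - s * ht)
  rcases eq_zero_or_one_of_pow_two_pow_eq_self hF hj hfix with h | h
  · exact .inl (by simpa [ht0] using h)
  · exact .inr ((div_eq_one_iff_eq ht0).1 h)

end FiniteField

theorem AddMonoidHom.encard_preimage_singleton_le {G H : Type*} [AddGroup G] [AddGroup H]
    (f : G →+ H) (e : H) : (f ⁻¹' {e}).encard ≤ (f.ker : Set G).encard := by
  rcases (f ⁻¹' {e}).eq_empty_or_nonempty with h | ⟨s₀, hs₀⟩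
  · simp [h]
  refine Set.encard_le_encard_of_injOn (f := (· - s₀)) (fun s hs => ?_)
    sub_left_injective.injOn
  simp_all [AddMonoidHom.mem_ker]

theorem IsAffineLine.exists_normal {ℓ : Set (F × F)} (h : IsAffineLine ℓ) :
    ∃ u : F × F, u ≠ 0 ∧ ∃ e, ∀ w ∈ ℓ, u.1 * w.1 + u.2 * w.2 = e := by
  obtain ⟨p, v, hv, rfl⟩ := h
  refine ⟨(v.2, -v.1), fun h => hv ?_, v.2 * p.1 - v.1 * p.2, ?_⟩
  · simp only [Prod.mk_eq_zero, neg_eq_zero] at h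
    exact Prod.ext h.2 h.1
  · rintro _ ⟨t, rfl⟩
    simp only [Prod.fst_add, Prod.snd_add, Prod.smul_fst, Prod.smul_snd, smul_eq_mul]
    ring

theorem det_eq_zero_of_orthogonal {u a b : F × F} (hu : u ≠ 0)
    (ha : u.1 * a.1 + u.2 * a.2 = 0) (hb : u.1 * b.1 + u.2 * b.2 = 0) :
    a.1 * b.2 - a.2 * b.1 = 0 := by
  have h₁ : u.1 * (a.1 * b.2 - a.2 * b.1) = 0 := by linear_combination b.2 * ha - a.2 * hb
  have h₂ : u.2 * (a.1 * b.2 - a.2 * b.1) = 0 := by linear_combination a.1 * hb - b.1 * ha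
  by_contra h
  exact hu (Prod.ext ((mul_eq_zero.1 h₁).resolve_right h) ((mul_eq_zero.1 h₂).resolve_right h))

def frobeniusAddLinear (j : ℕ) (L : F × F →ₗ[F] F × F) (w : F × F) : F × F :=
  (w.1 ^ 2 ^ j, w.2 ^ 2 ^ j) + L w

theorem frobeniusAddLinear_smul {j : ℕ} {L : F × F →ₗ[F] F × F} (s : F) (v : F × F) :
    frobeniusAddLinear j L (s • v) = s ^ 2 ^ j • (v.1 ^ 2 ^ j, v.2 ^ 2 ^ j) + s • L v := by
  ext <;> simp [frobeniusAddLinear, mul_pow]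

/-- The images of the Desarguesian plane under `f` and `g` are orthogoval affine planes. -/
def Orthogoval (f g : F × F → F × F) : Prop :=
  ∀ ℓ m : Set (F × F), IsAffineLine ℓ → IsAffineLine m →
    (f '' ℓ ∩ g '' m).encard ≤ 2

theorem Orthogoval.symm {f g : F × F → F × F} (h : Orthogoval f g) : Orthogoval g f :=
  fun ℓ m hℓ hm => Set.inter_comm (f '' m) (g '' ℓ) ▸ h m ℓ hm hℓ

theorem Orthogoval.comp_left {f g ψ : F × F → F × F} (h : Orthogoval f g)
    (hψ : Function.Injective ψ) : Orthogoval (ψ ∘ f) (ψ ∘ g) := fun ℓ m hℓ hm => by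
  rw [Set.image_comp, Set.image_comp, ← Set.image_inter hψ, hψ.encard_image]
  exact h ℓ m hℓ hm

def phi (k : ℕ) (w : F × F) : F × F :=
  (w.1 ^ 2 ^ k + w.2, w.2 ^ 2 ^ k + w.1 + w.2)

theorem phi_eq_frobeniusAddLinear (k : ℕ) :
    phi (F := F) k = frobeniusAddLinear k
      ((LinearMap.snd F F F).prod (LinearMap.fst F F F + LinearMap.snd F F F)) := by
  funext w
  ext <;> simp [phi, frobeniusAddLinear, add_assoc]

section CharTwo

variable [CharP F 2] {j : ℕ}

theorem frobeniusAddLinear_add {L : F × F →ₗ[F] F × F} (w w' : F × F) :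
    frobeniusAddLinear j L (w + w') = frobeniusAddLinear j L w + frobeniusAddLinear j L w' := by
  ext <;>
    simp only [frobeniusAddLinear, Prod.fst_add, Prod.snd_add, map_add, add_pow_char_pow] <;> ring

theorem phi_comp_phi_eq_frobeniusAddLinear (k : ℕ) :
    phi (F := F) k ∘ phi k = frobeniusAddLinear (2 * k)
      ((LinearMap.fst F F F + LinearMap.snd F F F).prod (LinearMap.fst F F F)) := by
  have h2 : (2 : F) = 0 := CharTwo.two_eq_zero
  funext w
  ext <;> simp only [phi, frobeniusAddLinear, Function.comp_apply, add_pow_char_pow, ← pow_mul,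
    ← pow_add, ← two_mul, LinearMap.prod_apply, LinearMap.coe_fst, Function.prod_apply,
    LinearMap.add_apply, LinearMap.fst_apply, LinearMap.snd_apply, Prod.mk_add_mk]
  · linear_combination w.2 ^ 2 ^ k * h2
  · linear_combination (w.1 ^ 2 ^ k + w.2 ^ 2 ^ k + w.2) * h2

variable [Fintype F] {n : ℕ}

theorem encard_setOf_mul_pow_two_pow_add_mul_eq_le_two (hF : Fintype.card F = 2 ^ n)
    (hj : j.Coprime n) {A B : F} (hAB : A ≠ 0 ∨ B ≠ 0) (e : F) :
    {s : F | A * s ^ 2 ^ j + B * s = e}.encard ≤ 2 := by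
  let f : F →+ F := AddMonoidHom.mk' (fun s => A * s ^ 2 ^ j + B * s) fun s t => by
    rw [add_pow_char_pow]; ring
  exact (f.encard_preimage_singleton_le e).trans
    (encard_setOf_mul_pow_two_pow_add_mul_eq_zero_le_two hF hj hAB)

theorem eq_zero_or_one_of_iterateFrobenius_three (hF : Fintype.card F = 2 ^ n)
    (hj : (3 * j).Coprime n) {x : F}
    (hx : iterateFrobenius F 2 j (iterateFrobenius F 2 j (iterateFrobenius F 2 j x)) = x) :
    x = 0 ∨ x = 1 := by
  refine eq_zero_or_one_of_pow_two_pow_eq_self hF hj (Eq.trans ?_ hx)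
  simp only [iterateFrobenius_def, ← pow_mul, ← pow_add]
  ring_nf

theorem pow_two_pow_add_one_ne_add_one (hF : Fintype.card F = 2 ^ n)
    (hj : (3 * j).Coprime n) (x : F) : x ^ (2 ^ j + 1) ≠ x + 1 := by
  intro hx
  set σ := iterateFrobenius F 2 j
  have h2 : (2 : F) = 0 := CharTwo.two_eq_zero
  have hxy : x * σ x = x + 1 := by rw [iterateFrobenius_def, ← hx, pow_succ']
  have hyz : σ x * σ (σ x) = σ x + 1 := by simpa using congrArg σ hxy
  have hzw : σ (σ x) * σ (σ (σ x)) = σ (σ x) + 1 := by simpa using congrArg σ hyz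
  have hxyz : x * σ x * σ (σ x) = 1 := by linear_combination x * hyz + hxy + x * h2
  have hyzw : σ x * σ (σ x) * σ (σ (σ x)) = 1 := by
    linear_combination σ x * hzw + hyz + σ x * h2
  have hσ3 : σ (σ (σ x)) = x :=
    mul_left_cancel₀ (left_ne_zero_of_mul_eq_one hyzw) (by linear_combination hyzw - hxyz)
  rcases eq_zero_or_one_of_iterateFrobenius_three hF hj hσ3 with rfl | rfl <;> simp_all

theorem pow_succ_add_pow_mul_add_pow_succ_ne_zero (hF : Fintype.card F = 2 ^ n)
    (hj : (3 * j).Coprime n) {c d : F} (hcd : c ≠ 0 ∨ d ≠ 0) :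
    c ^ (2 ^ j + 1) + c ^ 2 ^ j * d + d ^ (2 ^ j + 1) ≠ 0 := by
  intro h
  rcases eq_or_ne c 0 with rfl | hc
  · exact hcd.resolve_left (not_not.2 rfl) (by simpa using h)
  apply pow_two_pow_add_one_ne_add_one hF hj (d / c)
  rw [div_pow, div_add_one hc, div_eq_div_iff (pow_ne_zero _ hc) hc]
  linear_combination c * h - (d + c) * c ^ (2 ^ j + 1) * (CharTwo.two_eq_zero : (2 : F) = 0)

theorem orthogoval_id_frobeniusAddLinear {L : F × F →ₗ[F] F × F} (hF : Fintype.card F = 2 ^ n)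
    (hj : j.Coprime n)
    (hL : ∀ v : F × F, v ≠ 0 → v.1 ^ 2 ^ j * (L v).2 - v.2 ^ 2 ^ j * (L v).1 ≠ 0) :
    Orthogoval id (frobeniusAddLinear j L) := by
  rintro ℓ _ hℓ ⟨p, v, hv, rfl⟩
  rw [Set.image_id]
  obtain ⟨u, hu, e, he⟩ := hℓ.exists_normal
  set ψ := frobeniusAddLinear j L
  set A := u.1 * v.1 ^ 2 ^ j + u.2 * v.2 ^ 2 ^ j
  set B := u.1 * (L v).1 + u.2 * (L v).2
  have hAB : A ≠ 0 ∨ B ≠ 0 := by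
    by_contra! h
    exact hL v hv (det_eq_zero_of_orthogonal (a := (_, _)) hu h.1 h.2)
  have hsub : ℓ ∩ ψ '' {w | ∃ t : F, w = p + t • v} ⊆ (fun s => ψ (p + s • v)) ''
      {s | A * s ^ 2 ^ j + B * s = e - (u.1 * (ψ p).1 + u.2 * (ψ p).2)} := by
    rintro _ ⟨hwℓ, _, ⟨s, rfl⟩, rfl⟩
    refine ⟨s, ?_, rfl⟩
    have := he _ hwℓ
    simp only [ψ, frobeniusAddLinear_add, frobeniusAddLinear_smul, Prod.fst_add, Prod.snd_add,
      Prod.smul_fst, Prod.smul_snd, smul_eq_mul] at this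
    simp only [Set.mem_ofPred_eq, A, B]
    linear_combination this
  calc _ ≤ _ := Set.encard_le_encard hsub
    _ ≤ _ := Set.encard_image_le _ _
    _ ≤ 2 := encard_setOf_mul_pow_two_pow_add_mul_eq_le_two hF hj hAB _

theorem phi_injective (k : ℕ) (hF : Fintype.card F = 2 ^ n)
    (hk : (3 * k).Coprime n) : Function.Injective (phi (F := F) k) := by
  let φ : F × F →+ F × F := AddMonoidHom.mk' (phi k)
    (phi_eq_frobeniusAddLinear (F := F) k ▸ frobeniusAddLinear_add)
  refine (injective_iff_map_eq_zero φ).2 fun ⟨x, y⟩ h => ?_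
  set σ := iterateFrobenius F 2 k
  have h2 : (2 : F) = 0 := CharTwo.two_eq_zero
  obtain ⟨h₁, h₂⟩ : σ x + y = 0 ∧ σ y + x + y = 0 := Prod.mk_eq_zero.1 h
  obtain rfl : y = σ x := by linear_combination h₁ - σ x * h2
  have h₃ : σ (σ (σ x)) + σ x + σ (σ x) = 0 := by simpa using congrArg σ h₂
  have hσ3 : σ (σ (σ x)) = x := by linear_combination h₃ - h₂
  rcases eq_zero_or_one_of_iterateFrobenius_three hF hk hσ3 with rfl | rfl
  · simp
  · exact absurd h₂ (by simp [CharTwo.add_self_eq_zero])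

theorem orthogoval_id_phi (k : ℕ) (hF : Fintype.card F = 2 ^ n)
    (hk : (3 * k).Coprime n) : Orthogoval id (phi (F := F) k) := by
  rw [phi_eq_frobeniusAddLinear]
  refine orthogoval_id_frobeniusAddLinear hF (hk.coprime_dvd_left (dvd_mul_left k 3))
    fun ⟨c, d⟩ hv h => pow_succ_add_pow_mul_add_pow_succ_ne_zero hF hk (c := c) (d := d)
      (by rwa [Ne, Prod.mk_eq_zero, not_and_or] at hv) ?_
  simp only [LinearMap.prod_apply, Function.prod_apply, LinearMap.add_apply, LinearMap.fst_apply,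
    LinearMap.snd_apply] at h
  linear_combination h + d ^ (2 ^ k + 1) * (CharTwo.two_eq_zero : (2 : F) = 0)

theorem orthogoval_id_phi_comp_phi (k : ℕ) (hF : Fintype.card F = 2 ^ n)
    (hk : (6 * k).Coprime n) : Orthogoval id (phi (F := F) k ∘ phi k) := by
  have hk' : (3 * (2 * k)).Coprime n := by rwa [← mul_assoc]
  rw [phi_comp_phi_eq_frobeniusAddLinear]
  refine orthogoval_id_frobeniusAddLinear hF (hk'.coprime_dvd_left (dvd_mul_left _ 3))
    fun ⟨c, d⟩ hv h => pow_succ_add_pow_mul_add_pow_succ_ne_zero hF hk' (c := d) (d := c)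
      (by rwa [Ne, Prod.mk_eq_zero, not_and_or, or_comm] at hv) ?_
  simp only [LinearMap.prod_apply, Function.prod_apply, LinearMap.add_apply, LinearMap.fst_apply,
    LinearMap.snd_apply] at h
  linear_combination h + (d ^ 2 ^ (2 * k) * c + d ^ (2 ^ (2 * k) + 1)) *
    (CharTwo.two_eq_zero : (2 : F) = 0)

end CharTwo

end

theorem three_mutually_orthogoval_affine_planes_general
    (n k : ℕ) (hgcd : Nat.gcd (6 * k) n = 1)
    (F : Type*) [Field F] [Fintype F] (hF : Fintype.card F = 2 ^ n)
    (φ : F × F → F × F)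
    (hφ : φ = fun w => (w.1 ^ 2 ^ k + w.2, w.2 ^ 2 ^ k + w.1 + w.2)) :
    ∀ f g : F × F → F × F,
      f ∈ ({id, φ, φ ∘ φ} : Set (F × F → F × F)) →
      g ∈ ({id, φ, φ ∘ φ} : Set (F × F → F × F)) → f ≠ g →
      ∀ ℓ m : Set (F × F), IsAffineLine ℓ → IsAffineLine m →
        (f '' ℓ ∩ g '' m).encard ≤ 2 := by
  have : CharP F 2 := charP_of_card_eq_prime_pow hF
  obtain rfl : φ = phi k := hφ
  have h3k : (3 * k).Coprime n := Nat.Coprime.coprime_dvd_left ⟨2, by ring⟩ hgcd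
  have h₁ : Orthogoval id (phi (F := F) k) := orthogoval_id_phi k hF h3k
  have h₂ : Orthogoval id (phi (F := F) k ∘ phi k) := orthogoval_id_phi_comp_phi k hF hgcd
  have h₃ : Orthogoval (phi (F := F) k) (phi k ∘ phi k) :=
    h₁.comp_left (phi_injective k hF h3k)
  rintro f g (rfl | rfl | rfl) (rfl | rfl | rfl) hfg
  all_goals first
    | exact absurd rfl hfg
    | assumption
    | exact Orthogoval.symm ‹_›

/-- If `gcd(6k, n) = 1` (with `n, k ≥ 1`), `F` is the field with `q = 2ⁿ`
elements, and `φ_k(x, y) = (x^(2^k) + y, y^(2^k) + x + y)`, then the standard affine plane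
`AG(2,q)`, its image under `φ_k`, and its image under `φ_k ∘ φ_k` are mutually orthogoval:
for distinct `f, g` among `{id, φ_k, φ_k ∘ φ_k}` and any affine lines `ℓ`, `m` of `F²`, the
set `f(ℓ) ∩ g(m)` has at most two elements.  (In particular, taking `k = 1`, if
`gcd(n, 6) = 1` there is a set of three mutually orthogoval affine planes of order `2ⁿ`.) -/
theorem three_mutually_orthogoval_affine_planes
    (n k : ℕ) (hn : 1 ≤ n) (hk : 1 ≤ k) (hgcd : Nat.gcd (6 * k) n = 1)
    (F : Type*) [Field F] [Fintype F] (hF : Fintype.card F = 2 ^ n)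
    (φ : F × F → F × F)
    (hφ : φ = fun w => (w.1 ^ 2 ^ k + w.2, w.2 ^ 2 ^ k + w.1 + w.2)) :
    ∀ f g : F × F → F × F,
      f ∈ ({id, φ, φ ∘ φ} : Set (F × F → F × F)) →
      g ∈ ({id, φ, φ ∘ φ} : Set (F × F → F × F)) → f ≠ g →
      ∀ ℓ m : Set (F × F), IsAffineLine ℓ → IsAffineLine m →
        (f '' ℓ ∩ g '' m).encard ≤ 2 :=
  three_mutually_orthogoval_affine_planes_general n k hgcd F hF φ hφ
end
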